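/- arXiv:2305.07572 — 6 statements merged into one kernel-verified Lean document; each statement's English description precedes it below -/
import Mathlib

section
/- (Identifiability of the Gaussian-gated mixture of experts.) Let d, k, k' be positive integers. Let θ_1,…,θ_k with θ_i = (c_i, Γ_i, a_i, b_i, ν_i) ∈ ℝ^d × S_d^+ × ℝ^d × ℝ × ℝ_{>0} be pairwise distinct and π_1,…,π_k > 0 with Σ_i π_i = 1; likewise let θ'_1,…,θ'_{k'} be pairwise distinct with weights π'_j > 0 summing to 1. If Σ_{i=1}^{k} π_i N_d(x; c_i, Γ_i) φ(y; a_iᵀx + b_i, ν_i) = Σ_{j=1}^{k'} π'_j N_d(x; c'_j, Γ'_j) φ(y; (a'_j)ᵀx + b'_j, ν'_j) for Lebesgue-almost every (x, y) ∈ ℝ^d × ℝ, then the two mixing measures coincide: Σ_{i=1}^{k} π_i δ_{θ_i} = Σ_{j=1}^{k'} π'_j δ_{θ'_j} (in particular k = k' and the weighted atoms agree up to permutation). -/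
open Matrix MeasureTheory

/-- The parameter space `ℝ^d × (d×d matrices) × ℝ^d × ℝ × ℝ` of one expert component. -/
abbrev Param (d : ℕ) : Type :=
  (Fin d → ℝ) × Matrix (Fin d) (Fin d) ℝ × (Fin d → ℝ) × ℝ × ℝ

instance {d : ℕ} : MeasurableSpace (Matrix (Fin d) (Fin d) ℝ) :=
  (inferInstance : MeasurableSpace (Fin d → Fin d → ℝ))

/-- The univariate Gaussian density with mean `b` and variance `ν`. -/
noncomputable def gauss1 (y b ν : ℝ) : ℝ :=
  (2 * Real.pi * ν) ^ (-(1 : ℝ) / 2) * Real.exp (-((y - b) ^ 2) / (2 * ν))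

/-- The `d`-variate Gaussian density with mean `c` and covariance matrix `Γ`. -/
noncomputable def gaussd (d : ℕ) (x c : Fin d → ℝ) (Γ : Matrix (Fin d) (Fin d) ℝ) : ℝ :=
  (2 * Real.pi) ^ (-(d : ℝ) / 2) * Γ.det ^ (-(1 : ℝ) / 2) *
    Real.exp (-(1 / 2) * ((x - c) ⬝ᵥ (Γ⁻¹ *ᵥ (x - c))))

/-- The joint density of one component:
`F(x, y | (c, Γ, a, b, ν)) = N_d(x; c, Γ) · φ(y; aᵀx + b, ν)`. -/
noncomputable def Fcomp {d : ℕ} (θ : Param d) (x : Fin d → ℝ) (y : ℝ) : ℝ :=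
  gaussd d x θ.1 θ.2.1 * gauss1 y (θ.2.2.1 ⬝ᵥ x + θ.2.2.2.1) θ.2.2.2.2

/-- The mixing measure `Σ_i π_i δ_{θ_i}` on the parameter space. -/
noncomputable def mixingMeasure {d m : ℕ} (π : Fin m → ℝ) (θ : Fin m → Param d) :
    Measure (Param d) :=
  ∑ i, (ENNReal.ofReal (π i)) • Measure.dirac (θ i)

/-!
Restricted to a line `t ↦ t • v` through the origin of `ℝ^d × ℝ`, a component density is a
positive multiple of `exp (α t² + β t)`, where `(α, β)` depends on the component and on `v`.
For a generic direction `v` distinct components give distinct pairs `(α, β)`: the pairs are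
polynomial in `v`, a component is recovered from its pair as a function of `v`, and finitely
many nonzero polynomials vanish simultaneously only on a nowhere dense set. Since the functions
`exp (α t² + β t)` with distinct `(α, β)` are linearly independent (the lexicographically largest
exponent dominates as `t → ∞`), the total weight the two mixtures give to every component agrees.
-/

open Filter Topology Finset

theorem tendsto_exp_quadratic_atTop_zero {a b : ℝ} (h : a < 0 ∨ a = 0 ∧ b < 0) :
    Tendsto (fun t => Real.exp (a * t ^ 2 + b * t)) atTop (𝓝 0) := by
  refine Real.tendsto_exp_atBot.comp ?_
  rcases h with ha | ⟨rfl, hb⟩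
  · have hlin : Tendsto (fun t => a * t + b) atTop atBot :=
      tendsto_atBot_add_const_right _ b (tendsto_id.const_mul_atTop_of_neg ha)
    exact (tendsto_id.atTop_mul_atBot₀ hlin).congr fun t => by simp only [id]; ring
  · simpa using tendsto_id.const_mul_atTop_of_neg hb

theorem linearIndependent_exp_quadratic :
    LinearIndependent ℝ fun p : ℝ × ℝ => fun t : ℝ => Real.exp (p.1 * t ^ 2 + p.2 * t) := by
  classical
  rw [linearIndependent_iff']
  intro s g hg
  by_contra! hne
  obtain ⟨p₀, hp₀s, hp₀⟩ := hne
  set S := s.filter (g · ≠ 0)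
  obtain ⟨m, hmS, hmax⟩ := S.exists_max_image toLex ⟨p₀, mem_filter.2 ⟨hp₀s, hp₀⟩⟩
  have hS : ∀ t, ∑ p ∈ S, g p * Real.exp ((p.1 - m.1) * t ^ 2 + (p.2 - m.2) * t) = 0 := by
    intro t
    have hsum : ∑ p ∈ S, g p * Real.exp (p.1 * t ^ 2 + p.2 * t) = 0 := by
      rw [sum_filter_of_ne fun p _ h => left_ne_zero_of_mul h]
      simpa using congrFun hg t
    calc ∑ p ∈ S, g p * Real.exp ((p.1 - m.1) * t ^ 2 + (p.2 - m.2) * t)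
        = (∑ p ∈ S, g p * Real.exp (p.1 * t ^ 2 + p.2 * t)) *
            Real.exp (-(m.1 * t ^ 2 + m.2 * t)) := by
          rw [sum_mul]
          refine sum_congr rfl fun p _ => ?_
          rw [mul_assoc, ← Real.exp_add]
          ring_nf
      _ = 0 := by rw [hsum, zero_mul]
  have hlim : Tendsto (fun t => ∑ p ∈ S, g p * Real.exp ((p.1 - m.1) * t ^ 2 + (p.2 - m.2) * t))
      atTop (𝓝 (∑ p ∈ S, if p = m then g p else 0)) := by
    refine tendsto_finsetSum _ fun p hp => ?_
    split_ifs with hpm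
    · subst hpm
      simp
    · have hlt : toLex p < toLex m := (hmax p hp).lt_of_ne (toLex.injective.ne hpm)
      have hdecay : p.1 - m.1 < 0 ∨ p.1 - m.1 = 0 ∧ p.2 - m.2 < 0 := by
        rcases Prod.Lex.toLex_lt_toLex.1 hlt with h | ⟨h, h'⟩
        · exact Or.inl (sub_neg.2 h)
        · exact Or.inr ⟨sub_eq_zero.2 h, sub_neg.2 h'⟩
      simpa using (tendsto_exp_quadratic_atTop_zero hdecay).const_mul (g p)
  rw [sum_ite_eq' S m g, if_pos hmS, funext hS] at hlim
  exact (mem_filter.1 hmS).2 (tendsto_nhds_unique hlim tendsto_const_nhds)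

theorem AnalyticOnNhd.dense_ne {𝕜 E F : Type*} [NontriviallyNormedField 𝕜]
    [NormedAddCommGroup E] [NormedSpace 𝕜 E] [PreconnectedSpace E]
    [NormedAddCommGroup F] [NormedSpace 𝕜 F] {f g : E → F}
    (hf : AnalyticOnNhd 𝕜 f Set.univ) (hg : AnalyticOnNhd 𝕜 g Set.univ) (hfg : f ≠ g) :
    Dense {x | f x ≠ g x} := by
  refine interior_eq_empty_iff_dense_compl.1 (Set.eq_empty_of_forall_notMem fun x hx => hfg ?_)
  exact hf.eq_of_eventuallyEq hg (mem_interior_iff_mem_nhds.1 hx)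

@[fun_prop]
theorem analyticAt_apply {𝕜 ι : Type*} [NontriviallyNormedField 𝕜] [Fintype ι] (i : ι)
    (x : ι → 𝕜) : AnalyticAt 𝕜 (fun f : ι → 𝕜 => f i) x :=
  (ContinuousLinearMap.proj (R := 𝕜) (φ := fun _ : ι => 𝕜) i).analyticAt x

attribute [local fun_prop] analyticAt_fst analyticAt_snd

theorem Matrix.IsSymm.ext_of_dotProduct_mulVec_self {n K : Type*} [Fintype n] [DecidableEq n]
    [Field K] [CharZero K] {A B : Matrix n n K} (hA : A.IsSymm) (hB : B.IsSymm)
    (h : ∀ u, u ⬝ᵥ (A *ᵥ u) = u ⬝ᵥ (B *ᵥ u)) : A = B := by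
  ext i j
  have hii := h (Pi.single i 1)
  have hjj := h (Pi.single j 1)
  have hij := h (Pi.single i 1 + Pi.single j 1)
  simp only [mulVec_add, dotProduct_add, add_dotProduct, mulVec_single_one, single_dotProduct,
    col_apply, one_mul] at hii hjj hij
  rw [hA.apply i j, hB.apply i j] at hij
  have : (2 : K) * A i j = 2 * B i j := by linear_combination hij - hii - hjj
  exact mul_left_cancel₀ two_ne_zero this

def atomWeight {ι P : Type*} [Fintype ι] [DecidableEq P] (π : ι → ℝ) (θ : ι → P) (ϑ : P) : ℝ :=
  ∑ i with θ i = ϑ, π i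

theorem sum_mul_comp_eq_sum_atomWeight_mul {ι P : Type*} [Fintype ι] [DecidableEq P]
    (π : ι → ℝ) {θ : ι → P} {T : Finset P} (hT : ∀ i, θ i ∈ T) (f : P → ℝ) :
    ∑ i, π i * f (θ i) = ∑ ϑ ∈ T, atomWeight π θ ϑ * f ϑ := by
  rw [← sum_fiberwise_of_maps_to fun i _ => hT i]
  refine sum_congr rfl fun ϑ _ => ?_
  rw [atomWeight, sum_mul]
  exact sum_congr rfl fun i hi => by rw [(mem_filter.1 hi).2]

/-- The paper's parameter space `ℝ^d × S_d^+ × ℝ^d × ℝ × ℝ_{>0}`. -/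
def paramSpace (d : ℕ) : Set (Param d) := {θ | θ.2.1.PosDef ∧ 0 < θ.2.2.2.2}

/-- The coefficients of `t²` and `t` in the exponent of `t ↦ Fcomp θ (t • v.1) (t • v.2)`. -/
noncomputable def exponentCoeffs {d : ℕ} (θ : Param d) (v : (Fin d → ℝ) × ℝ) : ℝ × ℝ :=
  (-(1 / 2) * (v.1 ⬝ᵥ (θ.2.1⁻¹ *ᵥ v.1)) - (v.2 - θ.2.2.1 ⬝ᵥ v.1) ^ 2 / (2 * θ.2.2.2.2),
    θ.1 ⬝ᵥ (θ.2.1⁻¹ *ᵥ v.1) + θ.2.2.2.1 / θ.2.2.2.2 * (v.2 - θ.2.2.1 ⬝ᵥ v.1))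

theorem continuous_sum_mul_Fcomp {d m : ℕ} (ρ : Fin m → ℝ) (θ : Fin m → Param d) :
    Continuous fun z : (Fin d → ℝ) × ℝ => ∑ i, ρ i * Fcomp (θ i) z.1 z.2 := by
  unfold Fcomp gaussd gauss1
  simp only [dotProduct, mulVec]
  fun_prop

theorem Fcomp_pos {d : ℕ} {θ : Param d} (hθ : θ ∈ paramSpace d) (x : Fin d → ℝ) (y : ℝ) :
    0 < Fcomp θ x y := by
  have hdet := hθ.1.det_pos
  have hν := hθ.2
  unfold Fcomp gaussd gauss1
  positivity

theorem Fcomp_smul {d : ℕ} {θ : Param d} (hΓ : θ.2.1.IsSymm) (v : (Fin d → ℝ) × ℝ) (t : ℝ) :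
    Fcomp θ (t • v.1) (t • v.2) =
      Fcomp θ 0 0 * Real.exp ((exponentCoeffs θ v).1 * t ^ 2 + (exponentCoeffs θ v).2 * t) := by
  obtain ⟨c, Γ, a, b, ν⟩ := θ
  obtain ⟨x, y⟩ := v
  have hcross : c ⬝ᵥ (Γ⁻¹ *ᵥ x) = x ⬝ᵥ (Γ⁻¹ *ᵥ c) := by
    simpa [hΓ.inv.eq] using (dotProduct_transpose_mulVec Γ⁻¹ x c).symm
  simp only [Fcomp, gaussd, gauss1, exponentCoeffs, zero_sub, mulVec_neg, mulVec_sub,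
    mulVec_smul, dotProduct_neg, neg_dotProduct, dotProduct_sub, sub_dotProduct, smul_dotProduct,
    dotProduct_smul, dotProduct_zero, smul_eq_mul, hcross]
  ring_nf
  simp only [Real.exp_add, Real.exp_sub]
  ring_nf

theorem analyticOnNhd_exponentCoeffs {d : ℕ} (θ : Param d) :
    AnalyticOnNhd ℝ (exponentCoeffs θ) Set.univ := by
  intro v _
  unfold exponentCoeffs
  simp only [dotProduct, mulVec]
  fun_prop

theorem exponentCoeffs_injOn {d : ℕ} : Set.InjOn exponentCoeffs (paramSpace d) := by
  rintro ⟨c₁, Γ₁, a₁, b₁, ν₁⟩ ⟨hΓ₁, hν₁⟩ ⟨c₂, Γ₂, a₂, b₂, ν₂⟩ ⟨hΓ₂, hν₂⟩ h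
  simp only [exponentCoeffs, funext_iff, Prod.ext_iff] at h
  have hQ := fun v => (h v).1
  have hL := fun v => (h v).2
  have hν : ν₁ = ν₂ := by
    have := hQ (0, 1)
    simp only [mulVec_zero, dotProduct_zero] at this
    field_simp at this
    linarith
  subst hν
  have ha : a₁ = a₂ := by
    refine dotProduct_eq _ _ fun u => ?_
    have h0 := hQ (u, 0)
    have h1 := hQ (u, 1)
    field_simp at h0 h1
    linarith
  subst ha
  have hΓ : Γ₁ = Γ₂ := by
    refine inv_inj ?_ (isUnit_iff_ne_zero.2 hΓ₁.det_pos.ne')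
    refine IsSymm.ext_of_dotProduct_mulVec_self ?_ ?_ fun u => ?_
    · exact (isHermitian_iff_isSymm.1 hΓ₁.1).inv
    · exact (isHermitian_iff_isSymm.1 hΓ₂.1).inv
    · have := hQ (u, 0)
      linarith
  subst hΓ
  have hb : b₁ = b₂ := by
    have := hL (0, 1)
    simp only [mulVec_zero, dotProduct_zero] at this
    field_simp at this
    linarith
  subst hb
  have hc : c₁ = c₂ := by
    refine dotProduct_eq _ _ fun w => ?_
    have := hL (Γ₁ *ᵥ w, 0)
    simp only [mulVec_mulVec, nonsing_inv_mul _ (isUnit_iff_ne_zero.2 hΓ₁.det_pos.ne'),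
      one_mulVec] at this
    linarith
  subst hc
  rfl

theorem exists_injOn_exponentCoeffs {d : ℕ} {T : Finset (Param d)}
    (hT : (T : Set (Param d)) ⊆ paramSpace d) :
    ∃ v, Set.InjOn (exponentCoeffs · v) (T : Set (Param d)) := by
  set S : Set (Param d × Param d) := {p | p.1 ∈ T ∧ p.2 ∈ T ∧ p.1 ≠ p.2}
  have hS : S.Countable := ((T ×ˢ T : Finset _).finite_toSet.subset fun p hp =>
    Finset.mem_product.2 ⟨hp.1, hp.2.1⟩).countable
  have hdense : Dense (⋂ p ∈ S, {v | exponentCoeffs p.1 v ≠ exponentCoeffs p.2 v}) := by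
    refine dense_biInter_of_isOpen (fun p _ => ?_) hS fun p hp => ?_
    · exact isOpen_ne_fun (analyticOnNhd_exponentCoeffs p.1).continuous
        (analyticOnNhd_exponentCoeffs p.2).continuous
    · refine (analyticOnNhd_exponentCoeffs p.1).dense_ne (analyticOnNhd_exponentCoeffs p.2) ?_
      exact fun h => hp.2.2 (exponentCoeffs_injOn (hT hp.1) (hT hp.2.1) h)
  obtain ⟨v, hv⟩ := hdense.nonempty
  refine ⟨v, fun ϑ₁ h₁ ϑ₂ h₂ h => by_contra fun hne => ?_⟩
  exact Set.mem_iInter₂.1 hv (ϑ₁, ϑ₂) ⟨h₁, h₂, hne⟩ h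

theorem eq_zero_of_sum_mul_Fcomp_eq_zero {d : ℕ} {T : Finset (Param d)}
    (hT : (T : Set (Param d)) ⊆ paramSpace d) {w : Param d → ℝ}
    (h : ∀ x y, ∑ ϑ ∈ T, w ϑ * Fcomp ϑ x y = 0) : ∀ ϑ ∈ T, w ϑ = 0 := by
  obtain ⟨v, hv⟩ := exists_injOn_exponentCoeffs hT
  have hli := linearIndependent_exp_quadratic.comp _ hv.injective
  have hsum : ∑ ϑ : T, (w ϑ * Fcomp (ϑ : Param d) 0 0) • (fun t : ℝ => Real.exp
      ((exponentCoeffs (ϑ : Param d) v).1 * t ^ 2 + (exponentCoeffs (ϑ : Param d) v).2 * t)) = 0 := by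
    funext t
    simp only [Finset.sum_apply, Pi.smul_apply, smul_eq_mul, Pi.zero_apply]
    rw [sum_coe_sort T fun ϑ => w ϑ * Fcomp ϑ 0 0 *
      Real.exp ((exponentCoeffs ϑ v).1 * t ^ 2 + (exponentCoeffs ϑ v).2 * t)]
    refine (sum_congr rfl fun ϑ hϑ => ?_).trans (h (t • v.1) (t • v.2))
    rw [Fcomp_smul (isHermitian_iff_isSymm.1 (hT hϑ).1.isHermitian), mul_assoc]
  intro ϑ hϑ
  have := Fintype.linearIndependent_iff.1 hli _ hsum ⟨ϑ, hϑ⟩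
  exact (mul_eq_zero.1 this).resolve_right (Fcomp_pos (hT hϑ) 0 0).ne'

theorem mixingMeasure_eq_sum_atomWeight {d m : ℕ} [DecidableEq (Param d)] {π : Fin m → ℝ}
    (hπ : ∀ i, 0 ≤ π i) {θ : Fin m → Param d} {T : Finset (Param d)} (hT : ∀ i, θ i ∈ T) :
    mixingMeasure π θ = ∑ ϑ ∈ T, ENNReal.ofReal (atomWeight π θ ϑ) • Measure.dirac ϑ := by
  rw [mixingMeasure, ← sum_fiberwise_of_maps_to fun i _ => hT i]
  refine sum_congr rfl fun ϑ _ => ?_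
  rw [atomWeight, ENNReal.ofReal_sum_of_nonneg fun i _ => hπ i, sum_smul]
  exact sum_congr rfl fun i hi => by rw [(mem_filter.1 hi).2]

theorem gmoe_identifiability_general (d k k' : ℕ)
    (π : Fin k → ℝ) (θ : Fin k → Param d)
    (π' : Fin k' → ℝ) (θ' : Fin k' → Param d)
    (hπ : ∀ i, 0 < π i) (hπ' : ∀ j, 0 < π' j)
    (hΓ : ∀ i, ((θ i).2.1).IsSymm ∧ ((θ i).2.1).PosDef)
    (hΓ' : ∀ j, ((θ' j).2.1).IsSymm ∧ ((θ' j).2.1).PosDef)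
    (hν : ∀ i, 0 < (θ i).2.2.2.2) (hν' : ∀ j, 0 < (θ' j).2.2.2.2)
    (heq : ∀ᵐ z : (Fin d → ℝ) × ℝ,
      ∑ i, π i * Fcomp (θ i) z.1 z.2 = ∑ j, π' j * Fcomp (θ' j) z.1 z.2) :
    mixingMeasure π θ = mixingMeasure π' θ' := by
  classical
  set T := univ.image θ ∪ univ.image θ'
  have hθT : ∀ i, θ i ∈ T := fun i => mem_union_left _ (mem_image_of_mem θ (mem_univ i))
  have hθ'T : ∀ j, θ' j ∈ T := fun j => mem_union_right _ (mem_image_of_mem θ' (mem_univ j))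
  have hT : (T : Set (Param d)) ⊆ paramSpace d := by
    intro ϑ hϑ
    rcases mem_union.1 hϑ with h | h <;> obtain ⟨i, -, rfl⟩ := mem_image.1 h
    exacts [⟨(hΓ i).2, hν i⟩, ⟨(hΓ' i).2, hν' i⟩]
  have hpointwise := (Continuous.ae_eq_iff_eq volume (continuous_sum_mul_Fcomp π θ)
    (continuous_sum_mul_Fcomp π' θ')).1 heq
  have hdiff : ∀ x y, ∑ ϑ ∈ T, (atomWeight π θ ϑ - atomWeight π' θ' ϑ) * Fcomp ϑ x y = 0 := by
    intro x y
    simp_rw [sub_mul, sum_sub_distrib,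
      ← sum_mul_comp_eq_sum_atomWeight_mul π hθT fun ϑ => Fcomp ϑ x y,
      ← sum_mul_comp_eq_sum_atomWeight_mul π' hθ'T fun ϑ => Fcomp ϑ x y, sub_eq_zero]
    exact congrFun hpointwise (x, y)
  have hw := eq_zero_of_sum_mul_Fcomp_eq_zero hT hdiff
  rw [mixingMeasure_eq_sum_atomWeight (fun i => (hπ i).le) hθT,
    mixingMeasure_eq_sum_atomWeight (fun j => (hπ' j).le) hθ'T]
  exact sum_congr rfl fun ϑ hϑ => by rw [sub_eq_zero.1 (hw ϑ hϑ)]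

/-- **Identifiability of the Gaussian-gated mixture of experts.** If two finite mixtures
of products `N_d(x; c_i, Γ_i) φ(y; a_iᵀx + b_i, ν_i)` (with pairwise distinct components,
symmetric positive-definite `Γ_i`, positive `ν_i`, and positive weights summing to one)
agree for Lebesgue-almost every `(x, y) ∈ ℝ^d × ℝ`, then the corresponding mixing
measures coincide. -/
theorem gmoe_identifiability (d k k' : ℕ) (hd : 0 < d) (hk : 0 < k) (hk' : 0 < k')
    (π : Fin k → ℝ) (θ : Fin k → Param d)
    (π' : Fin k' → ℝ) (θ' : Fin k' → Param d)
    (hθdist : Function.Injective θ) (hθ'dist : Function.Injective θ')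
    (hπ : ∀ i, 0 < π i) (hπ' : ∀ j, 0 < π' j)
    (hπsum : ∑ i, π i = 1) (hπ'sum : ∑ j, π' j = 1)
    (hΓ : ∀ i, ((θ i).2.1).IsSymm ∧ ((θ i).2.1).PosDef)
    (hΓ' : ∀ j, ((θ' j).2.1).IsSymm ∧ ((θ' j).2.1).PosDef)
    (hν : ∀ i, 0 < (θ i).2.2.2.2) (hν' : ∀ j, 0 < (θ' j).2.2.2.2)
    (heq : ∀ᵐ z : (Fin d → ℝ) × ℝ,
      ∑ i, π i * Fcomp (θ i) z.1 z.2 = ∑ j, π' j * Fcomp (θ' j) z.1 z.2) :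
    mixingMeasure π θ = mixingMeasure π' θ' :=
  gmoe_identifiability_general d k k' π θ π' θ' hπ hπ' hΓ hΓ' hν hν' heq
end

section
/- r̄(2) = 4; that is, the bar-system of order (2, 4) admits no non-trivial solution, while the bar-system of order (2, 3) does admit a non-trivial solution. -/
/-- The `s`-th equation of the bar-system:
`Σ_{l=1}^m Σ_{n₁+2n₂=s} p_l² q_{1,l}^{n₁} q_{2,l}^{n₂} / (n₁!·n₂!)`. -/
noncomputable def barEq (m : ℕ) (p q1 q2 : Fin m → ℝ) (s : ℕ) : ℝ :=
  ∑ l : Fin m,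
    ∑ nn ∈ (Finset.range (s + 1) ×ˢ Finset.range (s + 1)).filter
        (fun nn => nn.1 + 2 * nn.2 = s),
      p l ^ 2 * q1 l ^ nn.1 * q2 l ^ nn.2 /
        ((nn.1.factorial : ℝ) * (nn.2.factorial : ℝ))

/-- The bar-system of order `(m, r)` admits a non-trivial solution: there are reals
`p_l, q_{1,l}, q_{2,l}` with all `p_l ≠ 0` and some `q_{1,l} ≠ 0` satisfying the
equations for every `s = 1, …, r`. -/
def barSol (m r : ℕ) : Prop :=
  ∃ p q1 q2 : Fin m → ℝ,
    (∀ l, p l ≠ 0) ∧ (∃ l, q1 l ≠ 0) ∧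
    ∀ s : ℕ, 1 ≤ s → s ≤ r → barEq m p q1 q2 s = 0

/-- `r̄(m)`: the smallest positive integer `r` such that the bar-system of order
`(m, r)` admits no non-trivial solution. -/
noncomputable def rbar (m : ℕ) : ℕ := sInf {r : ℕ | 1 ≤ r ∧ ¬ barSol m r}

lemma barEq_one' (p q1 q2 : Fin 2 → ℝ) :
    barEq 2 p q1 q2 1 = p 0^2 * q1 0 + p 1^2 * q1 1 := by
  simp [barEq, Fin.sum_univ_two, Finset.sum_filter, Finset.sum_product, Finset.sum_range_succ]

lemma barEq_two' (p q1 q2 : Fin 2 → ℝ) : barEq 2 p q1 q2 2 =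
    p 0^2 * (q1 0^2/2 + q2 0) + p 1^2 * (q1 1^2/2 + q2 1) := by
  simp [barEq, Fin.sum_univ_two, Finset.sum_filter, Finset.sum_product, Finset.sum_range_succ]
  ring

lemma barEq_three' (p q1 q2 : Fin 2 → ℝ) : barEq 2 p q1 q2 3 =
    p 0^2 * (q1 0^3/6 + q1 0 * q2 0) + p 1^2 * (q1 1^3/6 + q1 1 * q2 1) := by
  simp [barEq, Fin.sum_univ_two, Finset.sum_filter, Finset.sum_product, Finset.sum_range_succ]
  norm_num [Nat.factorial]
  ring

lemma barEq_four' (p q1 q2 : Fin 2 → ℝ) : barEq 2 p q1 q2 4 =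
    p 0^2 * (q1 0^4/24 + q1 0^2 * q2 0/2 + q2 0^2/2) +
    p 1^2 * (q1 1^4/24 + q1 1^2 * q2 1/2 + q2 1^2/2) := by
  simp [barEq, Fin.sum_univ_two, Finset.sum_filter, Finset.sum_product, Finset.sum_range_succ]
  norm_num [Nat.factorial]
  ring

/-- The core algebraic impossibility for the order `(2,4)` system. -/
lemma bar_core {a b x z y w : ℝ} (ha : 0 < a) (hb : 0 < b)
    (e1 : a*x + b*z = 0)
    (e2 : a*(x^2/2 + y) + b*(z^2/2 + w) = 0)
    (e3 : a*(x^3/6 + x*y) + b*(z^3/6 + z*w) = 0)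
    (e4 : a*(x^4/24 + x^2*y/2 + y^2/2) + b*(z^4/24 + z^2*w/2 + w^2/2) = 0)
    (hq : x ≠ 0 ∨ z ≠ 0) : False := by
  have hx : x ≠ 0 := by
    rcases hq with h | h
    · exact h
    · intro hx0
      apply h
      have : b * z = 0 := by rw [hx0] at e1; linarith
      exact (mul_eq_zero.mp this).resolve_left hb.ne'
  have hz : z ≠ 0 := by
    intro hz0
    apply hx
    have : a * x = 0 := by rw [hz0] at e1; linarith
    exact (mul_eq_zero.mp this).resolve_left ha.ne'
  have hxz : x * z < 0 := by
    have h1 : a * (x * z) = -(b * z^2) := by linear_combination z * e1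
    have h2 : 0 < b * z^2 := by positivity
    nlinarith
  have hxmz : x - z ≠ 0 := by
    intro h
    have : x = z := by linarith
    rw [this] at hxz; nlinarith [sq_nonneg z]
  have h5 : (a*(x - z)) * ((x^2/2 + y) - x*(x+z)/3) = 0 := by
    linear_combination e3 - z*e2 + (z^2/3)*e1
  have hU1 : x^2/2 + y = x*(x+z)/3 := by
    have := (mul_eq_zero.mp h5).resolve_left (mul_ne_zero ha.ne' hxmz)
    linarith
  have h6 : b * ((z^2/2 + w) - z*(x+z)/3) = 0 := by
    linear_combination e2 - a*hU1 - ((x+z)/3)*e1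
  have hU2 : z^2/2 + w = z*(x+z)/3 := by
    have := (mul_eq_zero.mp h6).resolve_left hb.ne'
    linarith
  have h7 : a * x * z * (x - z) * (x^2 - x*z + z^2) = 0 := by
    linear_combination (-36*z)*e4 + (18*z*a*((x^2/2+y) + x*(x+z)/3))*hU1
      + (18*z*b*((z^2/2+w) + z*(x+z)/3))*hU2 + (z^2*(2*x^2+4*x*z-z^2))*e1
  have hpos : 0 < x^2 - x*z + z^2 := by nlinarith [sq_nonneg x, sq_nonneg z]
  have hne : a * x * z * (x - z) ≠ 0 :=
    mul_ne_zero (mul_ne_zero (mul_ne_zero ha.ne' hx) hz) hxmz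
  rcases mul_eq_zero.mp h7 with h | h
  · exact hne h
  · exact hpos.ne' h

lemma not_barSol_two_four : ¬ barSol 2 4 := by
  rintro ⟨p, q1, q2, hp, ⟨l, hl⟩, hs⟩
  have ha : 0 < p 0 ^ 2 := pow_pos (abs_pos.mpr (hp 0)) 2 |>.trans_eq (by rw [sq_abs])
  have hb : 0 < p 1 ^ 2 := pow_pos (abs_pos.mpr (hp 1)) 2 |>.trans_eq (by rw [sq_abs])
  have e1 := hs 1 (by norm_num) (by norm_num); rw [barEq_one'] at e1
  have e2 := hs 2 (by norm_num) (by norm_num); rw [barEq_two'] at e2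
  have e3 := hs 3 (by norm_num) (by norm_num); rw [barEq_three'] at e3
  have e4 := hs 4 (by norm_num) (by norm_num); rw [barEq_four'] at e4
  have hq : q1 0 ≠ 0 ∨ q1 1 ≠ 0 := by
    fin_cases l
    · exact Or.inl hl
    · exact Or.inr hl
  exact bar_core ha hb e1 e2 e3 e4 hq

lemma barSol_two_three : barSol 2 3 := by
  refine ⟨![1, 1], ![1, -1], ![-(1/2), -(1/2)], ?_, ⟨0, by norm_num⟩, ?_⟩
  · intro l; fin_cases l <;> norm_num
  · intro s h1 h3
    interval_cases s
    · rw [barEq_one']; norm_num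
    · rw [barEq_two']; norm_num
    · rw [barEq_three']; norm_num

/-- `r̄(2) = 4`: the bar-system of order `(2, 4)` admits no non-trivial solution,
while the bar-system of order `(2, 3)` does admit a non-trivial solution. -/
theorem rbar_two_eq_four : rbar 2 = 4 ∧ ¬ barSol 2 4 ∧ barSol 2 3 := by
  refine ⟨?_, not_barSol_two_four, barSol_two_three⟩
  have h4 : (4 : ℕ) ∈ {r : ℕ | 1 ≤ r ∧ ¬ barSol 2 r} :=
    ⟨by norm_num, not_barSol_two_four⟩
  have hmono : ∀ r : ℕ, r ≤ 3 → barSol 2 r := by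
    intro r hr
    obtain ⟨p, q1, q2, hp, hq, hs⟩ := barSol_two_three
    exact ⟨p, q1, q2, hp, hq, fun s h1 h2 => hs s h1 (h2.trans hr)⟩
  refine le_antisymm (Nat.sInf_le h4) ?_
  refine le_csInf ⟨4, h4⟩ ?_
  rintro r ⟨hr1, hr2⟩
  by_contra h
  exact hr2 (hmono r (by omega))
end

section
/- For every integer m ≥ 4, the bar-system of order (m, 6) admits a non-trivial solution; equivalently, r̄(m) ≥ 7 for all m ≥ 4. -/
/-- Summing a function on `Fin m` that is constant from index `3` on. -/
lemma sum_split {m : ℕ} (hm : 4 ≤ m) (f : Fin m → ℝ)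
    (h : ∀ l : Fin m, 3 ≤ (l : ℕ) → f l = f ⟨3, by omega⟩) :
    ∑ l, f l = f ⟨0, by omega⟩ + f ⟨1, by omega⟩ + f ⟨2, by omega⟩
      + ((m : ℝ) - 3) * f ⟨3, by omega⟩ := by
  have key : ∀ l : Fin m, f l = f ⟨3, by omega⟩
      + (if l = ⟨0, by omega⟩ then f ⟨0, by omega⟩ - f ⟨3, by omega⟩ else 0)
      + (if l = ⟨1, by omega⟩ then f ⟨1, by omega⟩ - f ⟨3, by omega⟩ else 0)
      + (if l = ⟨2, by omega⟩ then f ⟨2, by omega⟩ - f ⟨3, by omega⟩ else 0) := by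
    intro l
    rcases lt_or_ge (l : ℕ) 3 with hl | hl
    · have : l = ⟨0, by omega⟩ ∨ l = ⟨1, by omega⟩ ∨ l = ⟨2, by omega⟩ := by
        rcases l with ⟨v, hv⟩
        simp only [Fin.ext_iff] at *
        omega
      rcases this with h0 | h0 | h0 <;> rw [h0] <;> simp [Fin.ext_iff]
    · rw [h l hl]
      rw [if_neg, if_neg, if_neg]
      · ring
      all_goals · intro he; rw [he] at hl; simp at hl
  rw [Finset.sum_congr rfl (fun l _ => key l)]
  simp [Finset.sum_add_distrib, Finset.sum_ite_eq', Finset.card_univ]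
  ring

/-- Inner sum of the bar-system for a single point with weight `w`. -/
noncomputable def barF (w x y : ℝ) (s : ℕ) : ℝ :=
  ∑ nn ∈ (Finset.range (s + 1) ×ˢ Finset.range (s + 1)).filter
      (fun nn => nn.1 + 2 * nn.2 = s),
    w * x ^ nn.1 * y ^ nn.2 / ((nn.1.factorial : ℝ) * (nn.2.factorial : ℝ))

lemma barF_smul (c w x y : ℝ) (s : ℕ) : c * barF w x y s = barF (c * w) x y s := by
  unfold barF
  rw [Finset.mul_sum]
  exact Finset.sum_congr rfl fun nn _ => by ring

noncomputable def myP (m : ℕ) : Fin m → ℝ := fun l =>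
  if (l : ℕ) = 0 ∨ (l : ℕ) = 1 then Real.sqrt 6
  else if (l : ℕ) = 2 then Real.sqrt (5 / 3)
  else Real.sqrt (5 / (7 * ((m : ℝ) - 3)))

noncomputable def myQ1 (m : ℕ) : Fin m → ℝ := fun l =>
  if (l : ℕ) = 0 then 1 else if (l : ℕ) = 1 then -1 else 0

noncomputable def myQ2 (m : ℕ) : Fin m → ℝ := fun l =>
  if (l : ℕ) = 0 ∨ (l : ℕ) = 1 then -(1/2)
  else if (l : ℕ) = 2 then 3/5 else -(7/5)

set_option maxHeartbeats 2000000 in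
lemma barF_sum_zero (s : ℕ) (h1 : 1 ≤ s) (h6 : s ≤ 6) :
    barF 6 1 (-(1/2)) s + barF 6 (-1) (-(1/2)) s + barF (5/3) 0 (3/5) s
      + barF (5/7) 0 (-(7/5)) s = 0 := by
  interval_cases s <;>
    norm_num [barF, Finset.sum_filter, Finset.sum_product, Finset.sum_range_succ, Nat.factorial]

lemma barEq_zero {m : ℕ} (hm : 4 ≤ m) (s : ℕ) (h1 : 1 ≤ s) (h6 : s ≤ 6) :
    barEq m (myP m) (myQ1 m) (myQ2 m) s = 0 := by
  have hm3 : (1 : ℝ) ≤ (m : ℝ) - 3 := by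
    have : (4 : ℝ) ≤ (m : ℝ) := by exact_mod_cast hm
    linarith
  have hMne : (m : ℝ) - 3 ≠ 0 := by linarith
  have hWpos : (0 : ℝ) < 5 / (7 * ((m : ℝ) - 3)) := by positivity
  have hb : barEq m (myP m) (myQ1 m) (myQ2 m) s
      = ∑ l : Fin m, barF (myP m l ^ 2) (myQ1 m l) (myQ2 m l) s := rfl
  rw [hb, sum_split hm _ ?hc]
  case hc =>
    intro l hl
    have h0 : ¬ ((l : ℕ) = 0 ∨ (l : ℕ) = 1) := by omega
    have h2 : ¬ ((l : ℕ) = 2) := by omega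
    have hp : myP m l = myP m ⟨3, by omega⟩ := by
      simp only [myP]
      rw [if_neg h0, if_neg h2, if_neg (by norm_num), if_neg (by norm_num)]
    have hq1 : myQ1 m l = myQ1 m ⟨3, by omega⟩ := by
      simp only [myQ1]
      rw [if_neg (by omega), if_neg (by omega), if_neg (by norm_num), if_neg (by norm_num)]
    have hq2 : myQ2 m l = myQ2 m ⟨3, by omega⟩ := by
      simp only [myQ2]
      rw [if_neg h0, if_neg h2, if_neg (by norm_num), if_neg (by norm_num)]
    rw [hp, hq1, hq2]
  have e0 : myP m ⟨0, by omega⟩ ^ 2 = 6 := by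
    simp only [myP]
    norm_num [Real.sq_sqrt]
  have e1 : myP m ⟨1, by omega⟩ ^ 2 = 6 := by
    simp only [myP]
    norm_num [Real.sq_sqrt]
  have e2 : myP m ⟨2, by omega⟩ ^ 2 = 5/3 := by
    simp only [myP]
    rw [if_neg (by norm_num), if_pos (by norm_num)]
    exact Real.sq_sqrt (by norm_num)
  have e3 : myP m ⟨3, by omega⟩ ^ 2 = 5 / (7 * ((m : ℝ) - 3)) := by
    simp only [myP]
    rw [if_neg (by norm_num), if_neg (by norm_num)]
    exact Real.sq_sqrt hWpos.le
  have f0 : myQ1 m ⟨0, by omega⟩ = 1 := by simp [myQ1]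
  have f1 : myQ1 m ⟨1, by omega⟩ = -1 := by simp [myQ1]
  have f2 : myQ1 m ⟨2, by omega⟩ = 0 := by simp [myQ1]
  have f3 : myQ1 m ⟨3, by omega⟩ = 0 := by simp [myQ1]
  have g0 : myQ2 m ⟨0, by omega⟩ = -(1/2) := by simp [myQ2]
  have g1 : myQ2 m ⟨1, by omega⟩ = -(1/2) := by simp [myQ2]
  have g2 : myQ2 m ⟨2, by omega⟩ = 3/5 := by simp [myQ2]
  have g3 : myQ2 m ⟨3, by omega⟩ = -(7/5) := by simp [myQ2]
  rw [e0, e1, e2, e3, f0, f1, f2, f3, g0, g1, g2, g3, barF_smul]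
  have hc : ((m : ℝ) - 3) * (5 / (7 * ((m : ℝ) - 3))) = 5/7 := by
    field_simp
  rw [hc]
  exact barF_sum_zero s h1 h6

lemma myP_ne {m : ℕ} (hm : 4 ≤ m) (l : Fin m) : myP m l ≠ 0 := by
  have hm3 : (1 : ℝ) ≤ (m : ℝ) - 3 := by
    have : (4 : ℝ) ≤ (m : ℝ) := by exact_mod_cast hm
    linarith
  have hWpos : (0 : ℝ) < 5 / (7 * ((m : ℝ) - 3)) := by positivity
  simp only [myP]
  split_ifs
  · exact ne_of_gt (Real.sqrt_pos.mpr (by norm_num))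
  · exact ne_of_gt (Real.sqrt_pos.mpr (by norm_num))
  · exact ne_of_gt (Real.sqrt_pos.mpr hWpos)

lemma barSol_six {m : ℕ} (hm : 4 ≤ m) : barSol m 6 :=
  ⟨myP m, myQ1 m, myQ2 m, myP_ne hm, ⟨⟨0, by omega⟩, by simp [myQ1]⟩,
    fun s h1 h6 => barEq_zero hm s h1 h6⟩


/-- For every `m ≥ 4`, the bar-system of order `(m, 6)` admits a non-trivial solution;
equivalently `r̄(m) ≥ 7` for all `m ≥ 4` (every positive `r` for which the bar-system
of order `(m, r)` has no non-trivial solution satisfies `r ≥ 7`). -/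
theorem rbar_ge_seven_of_four_le (m : ℕ) (hm : 4 ≤ m) :
    barSol m 6 ∧ ∀ r : ℕ, 1 ≤ r → ¬ barSol m r → 7 ≤ r := by
  refine ⟨barSol_six hm, fun r h1 hno => ?_⟩
  by_contra hlt
  push_neg at hlt
  exact hno ⟨myP m, myQ1 m, myQ2 m, myP_ne hm, ⟨⟨0, by omega⟩, by simp [myQ1]⟩,
    fun s hs1 hsr => barEq_zero hm s hs1 (by omega)⟩
end

section
/- For all integers m ≥ 1 and r ≥ 1: if the tilde-system of order (m, r) admits a non-trivial solution, then the bar-system of order (m, r) admits a non-trivial solution. Consequently, if the bar-system of order (m, r̄(m)) admits no non-trivial solution, then r̃(m) ≤ r̄(m) for every m ≥ 1. -/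
/-- The index set `J_{ℓ₁,ℓ₂} = {α ∈ ℕ⁵ : α₁+2α₂+α₃ = ℓ₁, α₃+α₄+2α₅ = ℓ₂}`
(as a finite set of quintuples). -/
def Jset (l1 l2 : ℕ) : Finset (ℕ × ℕ × ℕ × ℕ × ℕ) :=
  (Finset.range (l1 + 1) ×ˢ Finset.range (l1 + 1) ×ˢ Finset.range (l1 + 1) ×ˢ
      Finset.range (l2 + 1) ×ˢ Finset.range (l2 + 1)).filter
    (fun α => α.1 + 2 * α.2.1 + α.2.2.1 = l1 ∧ α.2.2.1 + α.2.2.2.1 + 2 * α.2.2.2.2 = l2)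

/-- The `(ℓ₁, ℓ₂)`-equation of the tilde-system:
`Σ_{l=1}^m Σ_{α ∈ J_{ℓ₁,ℓ₂}} p_l² q_{1,l}^{α₁} ⋯ q_{5,l}^{α₅} / (α₁!⋯α₅!)`. -/
noncomputable def tildeEq (m : ℕ) (p q1 q2 q3 q4 q5 : Fin m → ℝ) (l1 l2 : ℕ) : ℝ :=
  ∑ l : Fin m, ∑ α ∈ Jset l1 l2,
    p l ^ 2 * q1 l ^ α.1 * q2 l ^ α.2.1 * q3 l ^ α.2.2.1 * q4 l ^ α.2.2.2.1 *
        q5 l ^ α.2.2.2.2 /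
      ((α.1.factorial : ℝ) * (α.2.1.factorial : ℝ) * (α.2.2.1.factorial : ℝ) *
        (α.2.2.2.1.factorial : ℝ) * (α.2.2.2.2.factorial : ℝ))

/-- The tilde-system of order `(m, r)` admits a non-trivial solution: there are reals
`p_l, q_{1,l}, …, q_{5,l}` with all `p_l ≠ 0` and some `q_{4,l} ≠ 0` satisfying the
equations for all `ℓ₁, ℓ₂ ≥ 0` with `1 ≤ ℓ₁ + ℓ₂ ≤ r`. -/
def tildeSol (m r : ℕ) : Prop :=
  ∃ p q1 q2 q3 q4 q5 : Fin m → ℝ,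
    (∀ l, p l ≠ 0) ∧ (∃ l, q4 l ≠ 0) ∧
    ∀ l1 l2 : ℕ, 1 ≤ l1 + l2 → l1 + l2 ≤ r → tildeEq m p q1 q2 q3 q4 q5 l1 l2 = 0

/-- `r̃(m)`: the smallest positive integer `r` such that the tilde-system of order
`(m, r)` admits no non-trivial solution. -/
noncomputable def rtilde (m : ℕ) : ℕ := sInf {r : ℕ | 1 ≤ r ∧ ¬ tildeSol m r}

lemma barEq_eq_tildeEq (m : ℕ) (p q1 q2 q3 q4 q5 : Fin m → ℝ) (s : ℕ) :
    barEq m p q4 q5 s = tildeEq m p q1 q2 q3 q4 q5 0 s := by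
  unfold barEq tildeEq
  refine Finset.sum_congr rfl (fun l _ => ?_)
  refine Finset.sum_nbij' (fun nn => (0, 0, 0, nn.1, nn.2))
    (fun α => (α.2.2.2.1, α.2.2.2.2)) ?_ ?_ ?_ ?_ ?_
  · rintro ⟨n1, n2⟩ hnn
    simp only [Finset.mem_filter, Finset.mem_product, Finset.mem_range] at hnn
    unfold Jset
    simp only [Finset.mem_filter, Finset.mem_product, Finset.mem_range]
    exact ⟨⟨by omega, by omega, by omega, by omega, by omega⟩, trivial, by omega⟩
  · intro α hα
    unfold Jset at hα
    simp only [Finset.mem_filter, Finset.mem_product, Finset.mem_range] at hα ⊢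
    obtain ⟨⟨_, _, _, _, _⟩, h1, h2⟩ := hα
    omega
  · intro nn hnn; rfl
  · intro α hα
    unfold Jset at hα
    simp only [Finset.mem_filter, Finset.mem_product, Finset.mem_range] at hα
    obtain ⟨⟨_, _, _, _, _⟩, h1, h2⟩ := hα
    have e1 : α.1 = 0 := by omega
    have e2 : α.2.1 = 0 := by omega
    have e3 : α.2.2.1 = 0 := by omega
    obtain ⟨a1, a2, a3, a4, a5⟩ := α
    simp_all
  · intro nn hnn
    simp [Nat.factorial]

lemma tilde_to_bar (m r : ℕ) : tildeSol m r → barSol m r := by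
  rintro ⟨p, q1, q2, q3, q4, q5, hp, hq4, heq⟩
  refine ⟨p, q4, q5, hp, hq4, fun s hs1 hs2 => ?_⟩
  rw [barEq_eq_tildeEq m p q1 q2 q3 q4 q5 s]
  exact heq 0 s (by omega) (by omega)

/-- For all `m, r ≥ 1`: a non-trivial solution of the tilde-system of order `(m, r)`
yields a non-trivial solution of the bar-system of order `(m, r)`. Consequently, if the
bar-system of order `(m, r̄(m))` admits no non-trivial solution, then `r̃(m) ≤ r̄(m)`. -/
theorem tilde_le_bar (m r : ℕ) (hm : 1 ≤ m) (hr : 1 ≤ r) :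
    (tildeSol m r → barSol m r) ∧
    (¬ barSol m (rbar m) → rtilde m ≤ rbar m) := by
  refine ⟨tilde_to_bar m r, fun hbar => ?_⟩
  have hrb : 1 ≤ rbar m := by
    by_contra h
    push_neg at h
    interval_cases hh : rbar m
    · exact hbar ⟨fun _ => 1, fun _ => 1, fun _ => 1, fun _ => one_ne_zero,
        ⟨⟨0, hm⟩, one_ne_zero⟩, fun s h1 h2 => by omega⟩
  exact Nat.sInf_le ⟨hrb, fun ht => hbar (tilde_to_bar m (rbar m) ht)⟩
end

section
/- r̃(2) = 4; that is, the tilde-system of order (2, 4) admits no non-trivial solution, while the tilde-system of order (2, 3) does admit a non-trivial solution (for instance p₁ = p₂ = 1, q_{1,l} = q_{2,l} = q_{3,l} = 0 for l = 1,2, q_{4,1} = 1, q_{4,2} = −1, q_{5,1} = q_{5,2} = −1/2). -/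
/-! On `ℓ₁ = 0` the equations only involve `(q₄, q₅)`: the `(0, n)`-equation reads
`Σ_l p_l² c_n(q_{4,l}, q_{5,l}) = 0`, where `c_n(u, v)` is the coefficient of `t ^ n` in
`exp (u t + v t²)`. For two weights `a, b > 0`, eliminating `v` and `x` from the equations
`a c_n(u, v) + b c_n(w, x) = 0`, `n = 1, …, 4`, leaves `a² b (a + b) (a² + a b + b²) u⁶ = 0`,
so `u = w = 0`. For order `3` the given witness works: with `q₁ = q₂ = q₃ = 0` every equation
with `ℓ₁ > 0` vanishes termwise, and `c₂(±1, -1/2) = 0` while `c₁, c₃` are odd in `u`. -/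

open Finset Nat

-- the coefficient of `t ^ n` in `exp (u * t + v * t ^ 2)`
noncomputable def expQuadCoeff (u v : ℝ) (n : ℕ) : ℝ :=
  ∑ i ∈ range (n / 2 + 1), u ^ (n - 2 * i) * v ^ i / ((n - 2 * i)! * i !)

theorem tildeSol_mono {m r r' : ℕ} (h : tildeSol m r) (hr : r' ≤ r) : tildeSol m r' := by
  obtain ⟨p, q1, q2, q3, q4, q5, hp, hq4, heq⟩ := h
  exact ⟨p, q1, q2, q3, q4, q5, hp, hq4, fun l1 l2 h1 h2 => heq l1 l2 h1 (h2.trans hr)⟩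

theorem rtilde_eq_succ {m r : ℕ} (hsol : tildeSol m r) (hnot : ¬ tildeSol m (r + 1)) :
    rtilde m = r + 1 := by
  have hmem : r + 1 ∈ {r : ℕ | 1 ≤ r ∧ ¬ tildeSol m r} := ⟨by omega, hnot⟩
  refine le_antisymm (Nat.sInf_le hmem) (le_csInf ⟨_, hmem⟩ fun s ⟨_, hs⟩ => ?_)
  by_contra! hlt
  exact hs (tildeSol_mono hsol (by omega))

theorem tildeEq_zero_left (m : ℕ) (p q1 q2 q3 q4 q5 : Fin m → ℝ) (n : ℕ) :
    tildeEq m p q1 q2 q3 q4 q5 0 n = ∑ l, p l ^ 2 * expQuadCoeff (q4 l) (q5 l) n := by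
  refine sum_congr rfl fun l _ => ?_
  rw [expQuadCoeff, mul_sum]
  refine sum_nbij' (fun α => α.2.2.2.2) (fun i => (0, 0, 0, n - 2 * i, i)) ?_ ?_ ?_ ?_ ?_
  · intro α hα
    simp only [Jset, mem_filter, mem_product, mem_range] at hα
    simp only [mem_range]
    omega
  · intro i hi
    simp only [mem_range] at hi
    simp only [Jset, mem_filter, mem_product, mem_range, true_and]
    omega
  · rintro ⟨a1, a2, a3, a4, a5⟩ hα
    simp only [Jset, mem_filter, mem_product, mem_range] at hα
    simp only [Prod.mk.injEq, and_true]
    omega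
  · intro i _
    rfl
  · rintro ⟨a1, a2, a3, a4, a5⟩ hα
    simp only [Jset, mem_filter, mem_product, mem_range] at hα
    obtain ⟨rfl, rfl, rfl⟩ : a1 = 0 ∧ a2 = 0 ∧ a3 = 0 := by omega
    obtain rfl : a4 = n - 2 * a5 := by omega
    simp only [pow_zero, mul_one, factorial_zero, cast_one, one_mul]
    ring

theorem tildeEq_eq_zero_of_pos_left {m : ℕ} (p q4 q5 : Fin m → ℝ) {l1 : ℕ} (hl1 : 0 < l1)
    (l2 : ℕ) : tildeEq m p 0 0 0 q4 q5 l1 l2 = 0 := by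
  refine sum_eq_zero fun l _ => sum_eq_zero fun α hα => ?_
  simp only [Jset, mem_filter] at hα
  have : α.1 ≠ 0 ∨ α.2.1 ≠ 0 ∨ α.2.2.1 ≠ 0 := by omega
  rcases this with h | h | h <;> simp [zero_pow h]

section expQuadCoeff

variable (u v : ℝ)

theorem expQuadCoeff_one : expQuadCoeff u v 1 = u := by
  simp [expQuadCoeff]

theorem expQuadCoeff_two : expQuadCoeff u v 2 = u ^ 2 / 2 + v := by
  simp [expQuadCoeff, sum_range_succ]

theorem expQuadCoeff_three : expQuadCoeff u v 3 = u ^ 3 / 6 + u * v := by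
  simp [expQuadCoeff, sum_range_succ, factorial]

theorem expQuadCoeff_four :
    expQuadCoeff u v 4 = u ^ 4 / 24 + u ^ 2 * v / 2 + v ^ 2 / 2 := by
  simp [expQuadCoeff, sum_range_succ, factorial]

end expQuadCoeff

theorem eq_zero_of_weighted_expQuadCoeff_eq_zero {a b u v w x : ℝ} (ha : 0 < a) (hb : 0 < b)
    (h : ∀ n, 1 ≤ n → n ≤ 4 → a * expQuadCoeff u v n + b * expQuadCoeff w x n = 0) :
    u = 0 ∧ w = 0 := by
  have e1 := h 1 le_rfl (by norm_num)
  have e2 := h 2 (by norm_num) (by norm_num)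
  have e3 := h 3 (by norm_num) (by norm_num)
  have e4 := h 4 (by norm_num) le_rfl
  rw [expQuadCoeff_one, expQuadCoeff_one] at e1
  rw [expQuadCoeff_two, expQuadCoeff_two] at e2
  rw [expQuadCoeff_three, expQuadCoeff_three] at e3
  rw [expQuadCoeff_four, expQuadCoeff_four] at e4
  obtain ⟨V, hV⟩ : ∃ V, V = a * (u ^ 2 / 2 + v) := ⟨_, rfl⟩
  have hw : b * w = -(a * u) := by linear_combination e1
  have hA : 3 * (u - w) * V = a * u ^ 3 + b * w ^ 3 := by
    subst hV
    linear_combination 3 * e3 - 3 * w * e2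
  have hB : 3 * b * u * V = a * (b - a) * u ^ 3 := by
    refine mul_left_cancel₀ (add_pos ha hb).ne' ?_
    linear_combination
      b ^ 2 * hA + (3 * b * V + a ^ 2 * u ^ 2 - a * u * b * w + b ^ 2 * w ^ 2) * hw
  have hC : 6 * (a + b) * V ^ 2 = a * b * (a * u ^ 4 + b * w ^ 4) := by
    subst hV
    linear_combination
      12 * a * b * e4 + 6 * a * (a * (u ^ 2 / 2 + v) - b * (w ^ 2 / 2 + x)) * e2
  have hD : 6 * (a + b) * b ^ 3 * V ^ 2 = a ^ 2 * b * u ^ 4 * (a ^ 3 + b ^ 3) := by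
    linear_combination
      b ^ 3 * hC + a * b * (b * w - a * u) * (b ^ 2 * w ^ 2 + a ^ 2 * u ^ 2) * hw
  have key : a ^ 2 * b * (a + b) * (a ^ 2 + a * b + b ^ 2) * u ^ 6 = 0 := by
    linear_combination
      (-3 * u ^ 2) * hD + 2 * (a + b) * b * (3 * b * u * V + a * (b - a) * u ^ 3) * hB
  have hu : u = 0 := pow_eq_zero_iff (n := 6) (by norm_num) |>.mp <|
    (mul_eq_zero.mp key).resolve_left (by positivity)
  refine ⟨hu, ?_⟩
  subst hu
  simpa [hb.ne'] using hw

theorem not_tildeSol_two_four : ¬ tildeSol 2 4 := by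
  rintro ⟨p, q1, q2, q3, q4, q5, hp, ⟨l, hl⟩, h⟩
  have hcoeff (n : ℕ) (h1 : 1 ≤ n) (h4 : n ≤ 4) :
      p 0 ^ 2 * expQuadCoeff (q4 0) (q5 0) n + p 1 ^ 2 * expQuadCoeff (q4 1) (q5 1) n = 0 := by
    simpa [tildeEq_zero_left, Fin.sum_univ_two] using h 0 n (by omega) (by omega)
  obtain ⟨h0, h1⟩ := eq_zero_of_weighted_expQuadCoeff_eq_zero
    (sq_pos_iff.mpr (hp 0)) (sq_pos_iff.mpr (hp 1)) hcoeff
  fin_cases l <;> contradiction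

theorem tildeSol_two_three : tildeSol 2 3 := by
  refine ⟨1, 0, 0, 0, ![1, -1], fun _ => -(1 / 2), fun _ => one_ne_zero, ⟨0, by norm_num⟩, ?_⟩
  intro l1 l2 h1 h3
  rcases Nat.eq_zero_or_pos l1 with rfl | hl1
  · rw [tildeEq_zero_left]
    obtain ⟨hl2, hl2'⟩ : 1 ≤ l2 ∧ l2 ≤ 3 := by omega
    interval_cases l2 <;>
      norm_num [Fin.sum_univ_two, expQuadCoeff_one, expQuadCoeff_two, expQuadCoeff_three]
  · exact tildeEq_eq_zero_of_pos_left _ _ _ hl1 _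

/-- `r̃(2) = 4`: the tilde-system of order `(2, 4)` admits no non-trivial solution,
while the tilde-system of order `(2, 3)` does admit a non-trivial solution. -/
theorem rtilde_two_eq_four : rtilde 2 = 4 ∧ ¬ tildeSol 2 4 ∧ tildeSol 2 3 :=
  ⟨rtilde_eq_succ tildeSol_two_three not_tildeSol_two_four, not_tildeSol_two_four,
    tildeSol_two_three⟩
end

section
/- (Exterior interaction PDE.) For θ = (c, Γ, a, b, ν) ∈ ℝ × ℝ_{>0} × ℝ × ℝ × ℝ_{>0}, set F(x, y | θ) := φ(x; c, Γ)·φ(y; a·x+b, ν). Then for all x, y, a, b ∈ ℝ and Γ, ν > 0, the mixed partial derivative of F in c and b, evaluated at c = 0, satisfies ∂²F/∂c∂b (x, y | (0, Γ, a, b, ν)) = Γ^{−1} · ∂F/∂a (x, y | (0, Γ, a, b, ν)). -/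
/-- For `θ = (c, Γ, a, b, ν)`, `F(x, y | θ) := φ(x; c, Γ) · φ(y; a·x + b, ν)`. -/
noncomputable def F1 (c Γ a b ν : ℝ) (x y : ℝ) : ℝ :=
  gauss1 x c Γ * gauss1 y (a * x + b) ν

/-!
Every partial derivative of `F` in a mean parameter is `F` times a score:
`∂_c F = F · (x − c)/Γ`, `∂_b F = F · r/ν` and `∂_a F = F · x r/ν` with `r = y − a x − b`.
Differentiating `∂_b F` in `c` therefore gives `F · (x − c)/Γ · r/ν`, which at `c = 0` is
`Γ⁻¹ · F · x r/ν = Γ⁻¹ · ∂_a F`.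
-/

theorem hasDerivAt_gauss1_mean (y ν m : ℝ) :
    HasDerivAt (fun m => gauss1 y m ν) (gauss1 y m ν * ((y - m) / ν)) m := by
  refine (((((hasDerivAt_id m).const_sub y).pow 2).neg.div_const (2 * ν)).exp.const_mul
    ((2 * Real.pi * ν) ^ (-(1 : ℝ) / 2))).congr_deriv ?_
  simp only [gauss1, Pi.pow_apply, Pi.neg_apply, id]
  ring

theorem hasDerivAt_F1_c (c Γ a b ν x y : ℝ) :
    HasDerivAt (fun c => F1 c Γ a b ν x y) (F1 c Γ a b ν x y * ((x - c) / Γ)) c := by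
  refine (hasDerivAt_gauss1_mean x Γ c).mul_const (gauss1 y (a * x + b) ν) |>.congr_deriv ?_
  simp only [F1]
  ring

theorem hasDerivAt_F1_b (c Γ a b ν x y : ℝ) :
    HasDerivAt (fun b => F1 c Γ a b ν x y) (F1 c Γ a b ν x y * ((y - (a * x + b)) / ν)) b := by
  refine ((hasDerivAt_gauss1_mean y ν (a * x + b)).comp b
    ((hasDerivAt_id b).const_add (a * x))).const_mul (gauss1 x c Γ) |>.congr_deriv ?_
  simp only [F1]
  ring

theorem hasDerivAt_F1_a (c Γ a b ν x y : ℝ) :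
    HasDerivAt (fun a => F1 c Γ a b ν x y) (F1 c Γ a b ν x y * (x * (y - (a * x + b)) / ν)) a := by
  refine ((hasDerivAt_gauss1_mean y ν (a * x + b)).comp a
    (((hasDerivAt_id a).mul_const x).add_const b)).const_mul (gauss1 x c Γ) |>.congr_deriv ?_
  simp only [F1]
  ring

theorem exterior_interaction_pde_general (x y a b Γ ν : ℝ) :
    deriv (fun c => deriv (fun b' => F1 c Γ a b' ν x y) b) 0
      = Γ⁻¹ * deriv (fun a' => F1 0 Γ a' b ν x y) a := by
  have hb : (fun c => deriv (fun b' => F1 c Γ a b' ν x y) b)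
      = fun c => F1 c Γ a b ν x y * ((y - (a * x + b)) / ν) :=
    funext fun c => (hasDerivAt_F1_b c Γ a b ν x y).deriv
  rw [hb, ((hasDerivAt_F1_c 0 Γ a b ν x y).mul_const _).deriv,
    (hasDerivAt_F1_a 0 Γ a b ν x y).deriv]
  ring

/-- **Exterior interaction PDE.** For all `x y a b : ℝ` and `Γ, ν > 0`, the mixed
partial derivative of `F` in `c` and `b`, evaluated at `c = 0`, satisfies
`∂²F/∂c∂b (x, y | (0, Γ, a, b, ν)) = Γ⁻¹ · ∂F/∂a (x, y | (0, Γ, a, b, ν))`. -/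
theorem exterior_interaction_pde (x y a b Γ ν : ℝ) (hΓ : 0 < Γ) (hν : 0 < ν) :
    deriv (fun c => deriv (fun b' => F1 c Γ a b' ν x y) b) 0
      = Γ⁻¹ * deriv (fun a' => F1 0 Γ a' b ν x y) a :=
  exterior_interaction_pde_general x y a b Γ ν
end
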